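/- A Riordan array (g, f) satisfies the identity (g, f) = [g, f] · ([1] ⊕ (g, f)), where [g, f] is the quasi-Riordan array with columns (g, f, tf, t²f, …) and [1] ⊕ (g, f) is the direct sum of the 1×1 identity with the matrix of (g, f). -/

import Mathlib

open PowerSeries

/-
Column `0` of `[1] ⊕ (g, f)` is the unit vector `e₀`, which reproduces column `0` of `(g, f)`.
For column `k + 1`, row `n` of the product is `∑_{j < n} [tⁿ](tʲ f) · [tʲ](g fᵏ)`,
i.e. the Cauchy product of `g fᵏ` with `f`, the `j = n` term vanishing since `f(0) = 0`;
this is `[tⁿ](g fᵏ⁺¹)`.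
-/

/-- Column generating functions `(g, f, tf, t²f, …)` of the quasi-Riordan
array `[g, f]`. -/
noncomputable def qCol {K : Type*} [Field K] (g f : PowerSeries K) : ℕ → PowerSeries K
  | 0 => g
  | k + 1 => X ^ k * f

/-- The entries of the direct sum `[1] ⊕ (g, f)` of the `1×1` identity with
the Riordan matrix of `(g, f)` (whose entries are `d_{n,k} = [tⁿ] g·fᵏ`). -/
noncomputable def dirSum {K : Type*} [Field K] (g f : PowerSeries K) : ℕ → ℕ → K
  | 0, 0 => 1
  | 0, _ + 1 => 0
  | _ + 1, 0 => 0
  | n + 1, k + 1 => coeff n (g * f ^ k)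

theorem PowerSeries.coeff_mul_eq_sum_range_of_constantCoeff_eq_zero {R : Type*} [CommSemiring R]
    {f : PowerSeries R} (hf : constantCoeff f = 0) (h : PowerSeries R) (n : ℕ) :
    coeff n (h * f) = ∑ j ∈ Finset.range n, coeff j h * coeff (n - j) f := by
  rw [coeff_mul, Finset.Nat.sum_antidiagonal_eq_sum_range_succ_mk, Finset.sum_range_succ,
    Nat.sub_self, coeff_zero_eq_constantCoeff_apply, hf, mul_zero, add_zero]

section

variable {K : Type*} [Field K] (g f : PowerSeries K)

theorem dirSum_zero_right (j : ℕ) : dirSum g f j 0 = if j = 0 then 1 else 0 := by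
  cases j <;> rfl

theorem coeff_qCol_succ_of_lt {n j : ℕ} (hj : j < n) :
    coeff n (qCol g f (j + 1)) = coeff (n - j) f := by
  rw [qCol, coeff_X_pow_mul', if_pos hj.le]

end

theorem riordan_quasi_factorization {K : Type*} [Field K]
    (g f : PowerSeries K)
    (hf0 : constantCoeff f = 0) :
    ∀ n k : ℕ, coeff n (g * f ^ k) =
      ∑ j ∈ Finset.range (n + 1), coeff n (qCol g f j) * dirSum g f j k := by
  intro n k
  cases k with
  | zero =>
    simp only [dirSum_zero_right, mul_ite, mul_one, mul_zero, Finset.sum_ite_eq',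
      Finset.mem_range, Nat.zero_lt_succ, if_true, pow_zero, qCol]
  | succ k =>
    rw [pow_succ, ← mul_assoc, coeff_mul_eq_sum_range_of_constantCoeff_eq_zero hf0,
      Finset.sum_range_succ']
    simp only [dirSum, mul_zero, add_zero]
    refine Finset.sum_congr rfl fun j hj => ?_
    rw [coeff_qCol_succ_of_lt g f (Finset.mem_range.1 hj), mul_comm]
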